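/- Let α ∈ (0,1) and define b(γ) := ∫_ℝ sgn(x)|x|^{1-α} γ(dx) for probability measures γ on ℝ with finite (1-α)-moment. Then for all such γ, γ̃: |b(γ) - b(γ̃)| ≤ 2^α · W_{1-α}(γ, γ̃), where W_κ(γ,γ̃) := inf over couplings π of γ and γ̃ of ∫∫ |x-y|^κ π(dx,dy). -/

import Mathlib

/-!
Write `g(x) = sgn(x)|x|^κ` with `κ = 1 - α`. If `x, y` have the same sign, subadditivity of
`t ↦ t^κ` gives `|g x - g y| ≤ |x - y|^κ`; if they have opposite signs, concavity gives
`|x|^κ + |y|^κ ≤ 2^{1-κ} (|x| + |y|)^κ = 2^α |x - y|^κ`. So `g` is `κ`-Hölder with constant `2^α`,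
and integrating this bound against any coupling of `γ` and `γ̃` bounds `|b γ - b γ̃|` by `2^α`
times the transport cost of that coupling; then take the infimum over couplings.
-/

open MeasureTheory Real Set

/-- The `L^κ`-Wasserstein distance between probability measures on a normed space:
`W_κ(γ,γ̃) = inf over couplings π of ∫ ‖x-y‖^κ dπ`. -/
noncomputable def Wass {E : Type*} [MeasurableSpace E] [NormedAddCommGroup E]
    (κ : ℝ) (γ γ' : Measure E) : ℝ :=
  sInf { r : ℝ | ∃ m : Measure (E × E), IsProbabilityMeasure m ∧
    m.map Prod.fst = γ ∧ m.map Prod.snd = γ' ∧ r = ∫ p, ‖p.1 - p.2‖ ^ κ ∂m }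

section RpowInequalities

variable {κ a b : ℝ}

lemma abs_rpow_sub_rpow_le (hκ0 : 0 ≤ κ) (hκ1 : κ ≤ 1) (ha : 0 ≤ a) (hb : 0 ≤ b) :
    |a ^ κ - b ^ κ| ≤ |a - b| ^ κ := by
  wlog hba : b ≤ a generalizing a b
  · rw [abs_sub_comm, abs_sub_comm a b]
    exact this hb ha (le_of_not_ge hba)
  have hsub : a ^ κ ≤ (a - b) ^ κ + b ^ κ := by
    simpa using rpow_add_le_add_rpow (sub_nonneg.mpr hba) hb hκ0 hκ1
  have hmono : b ^ κ ≤ a ^ κ := rpow_le_rpow hb hba hκ0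
  rw [abs_of_nonneg (sub_nonneg.mpr hmono), abs_of_nonneg (sub_nonneg.mpr hba)]
  linarith

lemma rpow_add_rpow_le_two_rpow_mul (hκ0 : 0 ≤ κ) (hκ1 : κ ≤ 1) (ha : 0 ≤ a) (hb : 0 ≤ b) :
    a ^ κ + b ^ κ ≤ 2 ^ (1 - κ) * (a + b) ^ κ := by
  have hconc := (concaveOn_rpow hκ0 hκ1).2 (mem_Ici.2 ha) (mem_Ici.2 hb)
    (by norm_num : (0:ℝ) ≤ 1 / 2) (by norm_num : (0:ℝ) ≤ 1 / 2) (by norm_num)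
  simp only [smul_eq_mul] at hconc
  rw [show 1 / 2 * a + 1 / 2 * b = (a + b) / 2 by ring, div_rpow (by linarith) zero_le_two] at hconc
  have h2κ : (0:ℝ) < 2 ^ κ := rpow_pos_of_pos two_pos κ
  rw [rpow_sub two_pos, rpow_one]
  calc a ^ κ + b ^ κ = 2 * (1 / 2 * a ^ κ + 1 / 2 * b ^ κ) := by ring
    _ ≤ 2 * ((a + b) ^ κ / 2 ^ κ) := by linarith
    _ = 2 / 2 ^ κ * (a + b) ^ κ := by ring

end RpowInequalities

noncomputable def signedRpow (κ x : ℝ) : ℝ := Real.sign x * |x| ^ κ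

namespace signedRpow

variable {κ x y : ℝ}

lemma of_nonneg (hκ : κ ≠ 0) (hx : 0 ≤ x) : signedRpow κ x = x ^ κ := by
  rcases hx.lt_or_eq with hx | rfl
  · rw [signedRpow, Real.sign_of_pos hx, abs_of_pos hx, one_mul]
  · simp [signedRpow, Real.sign_zero, zero_rpow hκ]

lemma neg (κ x : ℝ) : signedRpow κ (-x) = -signedRpow κ x := by
  rw [signedRpow, signedRpow, Real.sign_neg, abs_neg, neg_mul]

lemma abs_le (κ x : ℝ) : |signedRpow κ x| ≤ |x| ^ κ := by
  rw [signedRpow, abs_mul, abs_of_nonneg (rpow_nonneg (abs_nonneg x) κ)]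
  refine mul_le_of_le_one_left (rpow_nonneg (abs_nonneg x) κ) ?_
  rcases Real.sign_apply_eq x with h | h | h <;> simp [h]

lemma measurable (κ : ℝ) : Measurable (signedRpow κ) := by
  refine .mul ?_ (by fun_prop)
  exact Measurable.ite measurableSet_Iio measurable_const
    (Measurable.ite measurableSet_Ioi measurable_const measurable_const)

lemma abs_sub_le_of_nonneg (hκ0 : 0 < κ) (hκ1 : κ ≤ 1) (hx : 0 ≤ x) (hy : 0 ≤ y) :
    |signedRpow κ x - signedRpow κ y| ≤ |x - y| ^ κ := by
  rw [of_nonneg hκ0.ne' hx, of_nonneg hκ0.ne' hy]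
  exact abs_rpow_sub_rpow_le hκ0.le hκ1 hx hy

lemma abs_sub_le_of_nonneg_of_nonpos (hκ0 : 0 < κ) (hκ1 : κ ≤ 1) (hx : 0 ≤ x) (hy : y ≤ 0) :
    |signedRpow κ x - signedRpow κ y| ≤ 2 ^ (1 - κ) * |x - y| ^ κ := by
  have hy' : 0 ≤ -y := neg_nonneg.mpr hy
  rw [← neg_neg y, neg, of_nonneg hκ0.ne' hx, of_nonneg hκ0.ne' hy', sub_neg_eq_add, sub_neg_eq_add,
    abs_of_nonneg (by positivity), abs_of_nonneg (by linarith)]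
  exact rpow_add_rpow_le_two_rpow_mul hκ0.le hκ1 hx hy'

theorem abs_sub_le (hκ0 : 0 < κ) (hκ1 : κ ≤ 1) (x y : ℝ) :
    |signedRpow κ x - signedRpow κ y| ≤ 2 ^ (1 - κ) * |x - y| ^ κ := by
  have hle : |x - y| ^ κ ≤ 2 ^ (1 - κ) * |x - y| ^ κ :=
    le_mul_of_one_le_left (rpow_nonneg (abs_nonneg _) κ) (one_le_rpow one_le_two (by linarith))
  rcases le_total 0 x with hx | hx <;> rcases le_total 0 y with hy | hy
  · exact (abs_sub_le_of_nonneg hκ0 hκ1 hx hy).trans hle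
  · exact abs_sub_le_of_nonneg_of_nonpos hκ0 hκ1 hx hy
  · rw [abs_sub_comm, abs_sub_comm x]
    exact abs_sub_le_of_nonneg_of_nonpos hκ0 hκ1 hy hx
  · have h := abs_sub_le_of_nonneg hκ0 hκ1 (neg_nonneg.mpr hy) (neg_nonneg.mpr hx)
    rw [neg, neg, neg_sub_neg, neg_sub_neg] at h
    exact h.trans hle

lemma integrable {μ : Measure ℝ} (h : Integrable (fun x => |x| ^ κ) μ) :
    Integrable (signedRpow κ) μ :=
  h.mono (measurable κ).aestronglyMeasurable <| ae_of_all _ fun x => by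
    simpa [abs_of_nonneg (rpow_nonneg (abs_nonneg x) κ)] using abs_le κ x

end signedRpow

section Coupling

variable {E : Type*} [NormedAddCommGroup E] [MeasurableSpace E] {κ : ℝ}

lemma integrable_norm_sub_rpow_of_map [MeasurableSub₂ E] [OpensMeasurableSpace E]
    (hκ0 : 0 ≤ κ) (hκ1 : κ ≤ 1) {m : Measure (E × E)}
    (h₁ : Integrable (fun x => ‖x‖ ^ κ) (m.map Prod.fst))
    (h₂ : Integrable (fun x => ‖x‖ ^ κ) (m.map Prod.snd)) :
    Integrable (fun p : E × E => ‖p.1 - p.2‖ ^ κ) m := by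
  have hsum : Integrable (fun p : E × E => ‖p.1‖ ^ κ + ‖p.2‖ ^ κ) m :=
    (h₁.comp_measurable measurable_fst).add (h₂.comp_measurable measurable_snd)
  have hmeas : Measurable fun p : E × E => ‖p.1 - p.2‖ ^ κ :=
    (measurable_fst.sub measurable_snd).norm.pow_const κ
  refine hsum.mono hmeas.aestronglyMeasurable <| ae_of_all _ fun p => ?_
  rw [norm_of_nonneg (by positivity), norm_of_nonneg (by positivity)]
  calc ‖p.1 - p.2‖ ^ κ ≤ (‖p.1‖ + ‖p.2‖) ^ κ := rpow_le_rpow (norm_nonneg _) (norm_sub_le _ _) hκ0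
    _ ≤ ‖p.1‖ ^ κ + ‖p.2‖ ^ κ := rpow_add_le_add_rpow (norm_nonneg _) (norm_nonneg _) hκ0 hκ1

variable {f : E → ℝ} {C : ℝ} {γ γ' : Measure E}

lemma abs_integral_sub_le_mul_integral_of_coupling
    (hf : ∀ x y, |f x - f y| ≤ C * ‖x - y‖ ^ κ) (hfγ : Integrable f γ) (hfγ' : Integrable f γ')
    {m : Measure (E × E)} (hm₁ : m.map Prod.fst = γ) (hm₂ : m.map Prod.snd = γ')
    (hcost : Integrable (fun p : E × E => ‖p.1 - p.2‖ ^ κ) m) :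
    |∫ x, f x ∂γ - ∫ x, f x ∂γ'| ≤ C * ∫ p, ‖p.1 - p.2‖ ^ κ ∂m := by
  subst hm₁ hm₂
  have hf₁ : Integrable (fun p : E × E => f p.1) m := hfγ.comp_measurable measurable_fst
  have hf₂ : Integrable (fun p : E × E => f p.2) m := hfγ'.comp_measurable measurable_snd
  rw [integral_map measurable_fst.aemeasurable hfγ.aestronglyMeasurable,
    integral_map measurable_snd.aemeasurable hfγ'.aestronglyMeasurable, ← integral_sub hf₁ hf₂,
    ← integral_const_mul]
  exact abs_integral_le_integral_abs.trans <|
    integral_mono (hf₁.sub hf₂).abs (hcost.const_mul C) fun p => hf p.1 p.2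

theorem abs_integral_sub_le_mul_wass [MeasurableSub₂ E] [OpensMeasurableSpace E]
    [IsProbabilityMeasure γ] [IsProbabilityMeasure γ'] (hκ0 : 0 ≤ κ) (hκ1 : κ ≤ 1) (hC : 0 < C)
    (hf : ∀ x y, |f x - f y| ≤ C * ‖x - y‖ ^ κ) (hfγ : Integrable f γ) (hfγ' : Integrable f γ')
    (hγ : Integrable (fun x => ‖x‖ ^ κ) γ) (hγ' : Integrable (fun x => ‖x‖ ^ κ) γ') :
    |∫ x, f x ∂γ - ∫ x, f x ∂γ'| ≤ C * Wass κ γ γ' := by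
  rw [← div_le_iff₀' hC]
  refine le_csInf ⟨_, γ.prod γ', inferInstance, by simp, by simp, rfl⟩ ?_
  rintro _ ⟨m, -, hm₁, hm₂, rfl⟩
  rw [div_le_iff₀' hC]
  exact abs_integral_sub_le_mul_integral_of_coupling hf hfγ hfγ' hm₁ hm₂ <|
    integrable_norm_sub_rpow_of_map hκ0 hκ1 (hm₁ ▸ hγ) (hm₂ ▸ hγ')

end Coupling

/-- For `α ∈ (0,1)` and `b(γ) = ∫ sgn(x)|x|^{1-α} γ(dx)`, one has
`|b(γ) - b(γ̃)| ≤ 2^α · W_{1-α}(γ,γ̃)` for probability measures with finite `(1-α)`-moment. -/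
theorem stmt3 (α : ℝ) (hα : α ∈ Set.Ioo (0:ℝ) 1)
    (γ γ' : Measure ℝ) [IsProbabilityMeasure γ] [IsProbabilityMeasure γ']
    (hγ : Integrable (fun x => |x| ^ (1 - α)) γ)
    (hγ' : Integrable (fun x => |x| ^ (1 - α)) γ') :
    |(∫ x, Real.sign x * |x| ^ (1 - α) ∂γ) - ∫ x, Real.sign x * |x| ^ (1 - α) ∂γ'|
      ≤ (2:ℝ) ^ α * Wass (1 - α) γ γ' := by
  obtain ⟨hα0, hα1⟩ := hα
  have hκ0 : 0 < 1 - α := by linarith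
  have hκ1 : 1 - α ≤ 1 := by linarith
  have hC : (2:ℝ) ^ α = 2 ^ (1 - (1 - α)) := by rw [sub_sub_cancel]
  rw [hC]
  exact abs_integral_sub_le_mul_wass hκ0.le hκ1 (rpow_pos_of_pos two_pos _)
    (signedRpow.abs_sub_le hκ0 hκ1) (signedRpow.integrable hγ) (signedRpow.integrable hγ') hγ hγ'
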